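/- Let G be a group, H a subgroup of index 2, σ ∈ G \ H, and η : H → ℂ^× a character with η^σ = η^{-1}, where η^σ(x) = η(σxσ^{-1}). Then the symmetric cube of the induced two-dimensional representation Ind_H^G η decomposes as sym³(Ind_H^G η) ≅ Ind_H^G(η³) ⊕ Ind_H^G(η). -/
import Mathlib


/-- The explicit symmetric cube map on `2×2` complex matrices. -/
noncomputable def sym3 (A : Matrix (Fin 2) (Fin 2) ℂ) : Matrix (Fin 4) (Fin 4) ℂ :=
  let a := A 0 0; let b := A 0 1; let c := A 1 0; let d := A 1 1
  !![a^3,     a^2*b,           a*b^2,           b^3;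
     3*a^2*c, 2*a*b*c + a^2*d, 2*a*b*d + b^2*c, 3*b^2*d;
     3*a*c^2, 2*a*c*d + b*c^2, 2*b*c*d + a*d^2, 3*b*d^2;
     c^3,     c^2*d,           c*d^2,           d^3]

theorem sym3_mul' (A B : Matrix (Fin 2) (Fin 2) ℂ) : sym3 (A * B) = sym3 A * sym3 B := by
  ext i j
  fin_cases i <;> fin_cases j <;>
    simp [sym3, Matrix.mul_apply, Fin.sum_univ_succ] <;> ring

theorem blk' (A B : Matrix (Fin 2) (Fin 2) ℂ) :
    Matrix.reindex finSumFinEquiv finSumFinEquiv (Matrix.fromBlocks A 0 0 B) =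
    !![A 0 0, A 0 1, 0, 0; A 1 0, A 1 1, 0, 0;
       0, 0, B 0 0, B 0 1; 0, 0, B 1 0, B 1 1] := by
  ext i j
  fin_cases i <;> fin_cases j <;>
    simp [Matrix.reindex_apply, Matrix.submatrix_apply, Matrix.fromBlocks, finSumFinEquiv,
      Fin.addCases, Fin.subNat, Fin.castLT] <;> rfl

theorem blk_mul' (A B A' B' : Matrix (Fin 2) (Fin 2) ℂ) :
    Matrix.reindex finSumFinEquiv finSumFinEquiv (Matrix.fromBlocks A 0 0 B) *
    Matrix.reindex finSumFinEquiv finSumFinEquiv (Matrix.fromBlocks A' 0 0 B') =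
    Matrix.reindex finSumFinEquiv finSumFinEquiv (Matrix.fromBlocks (A*A') 0 0 (B*B')) := by
  simp [Matrix.reindex_apply, Matrix.submatrix_mul_equiv, Matrix.fromBlocks_multiply]


set_option maxHeartbeats 1600000 in
/-- Let `H ≤ G` have index 2, `σ ∈ G \ H` and `η : H → ℂ^×` a character with
`η^σ = η⁻¹`.  Let `φ = Ind_H^G η`, `ψ₁ = Ind_H^G (η³)`, `ψ₂ = Ind_H^G η` be the induced
matrix representations (given by their standard matrix forms: `diag(η x, η^σ x)` on `H` and
antidiagonal at `σ`).  Then `sym³(φ) ≅ ψ₁ ⊕ ψ₂`, i.e. there is an invertible matrix `P`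
intertwining `sym³ ∘ φ` with the block-diagonal sum of `ψ₁` and `ψ₂`. -/
theorem stmt_5 (G : Type*) [Group G] (H : Subgroup G)
    (hH : H.index = 2) (σ : G) (hσ : σ ∉ H)
    (η : H →* ℂˣ)
    (hconj : ∀ (x : H) (hx' : σ * (x : G) * σ⁻¹ ∈ H), η ⟨σ * (x : G) * σ⁻¹, hx'⟩ = (η x)⁻¹)
    (φ ψ₁ ψ₂ : G → Matrix (Fin 2) (Fin 2) ℂ)
    (hφmul : ∀ g h : G, φ (g * h) = φ g * φ h)
    (hψ₁mul : ∀ g h : G, ψ₁ (g * h) = ψ₁ g * ψ₁ h)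
    (hψ₂mul : ∀ g h : G, ψ₂ (g * h) = ψ₂ g * ψ₂ h)
    (hφH : ∀ (x : G) (hx : x ∈ H) (hx' : σ * x * σ⁻¹ ∈ H),
      φ x = Matrix.diagonal ![((η ⟨x, hx⟩ : ℂˣ) : ℂ), ((η ⟨σ * x * σ⁻¹, hx'⟩ : ℂˣ) : ℂ)])
    (hφσ : ∀ hs : σ ^ 2 ∈ H, φ σ = !![0, 1; ((η ⟨σ ^ 2, hs⟩ : ℂˣ) : ℂ), 0])
    (hψ₁H : ∀ (x : G) (hx : x ∈ H) (hx' : σ * x * σ⁻¹ ∈ H),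
      ψ₁ x = Matrix.diagonal ![((η ⟨x, hx⟩ : ℂˣ) : ℂ) ^ 3,
        ((η ⟨σ * x * σ⁻¹, hx'⟩ : ℂˣ) : ℂ) ^ 3])
    (hψ₁σ : ∀ hs : σ ^ 2 ∈ H, ψ₁ σ = !![0, 1; ((η ⟨σ ^ 2, hs⟩ : ℂˣ) : ℂ) ^ 3, 0])
    (hψ₂H : ∀ (x : G) (hx : x ∈ H) (hx' : σ * x * σ⁻¹ ∈ H),
      ψ₂ x = Matrix.diagonal ![((η ⟨x, hx⟩ : ℂˣ) : ℂ), ((η ⟨σ * x * σ⁻¹, hx'⟩ : ℂˣ) : ℂ)])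
    (hψ₂σ : ∀ hs : σ ^ 2 ∈ H, ψ₂ σ = !![0, 1; ((η ⟨σ ^ 2, hs⟩ : ℂˣ) : ℂ), 0]) :
    ∃ P : Matrix (Fin 4) (Fin 4) ℂ, IsUnit P ∧
      ∀ g : G, sym3 (φ g) * P = P * Matrix.reindex finSumFinEquiv finSumFinEquiv (Matrix.fromBlocks (ψ₁ g) 0 0 (ψ₂ g)) := by
  have hmem : ∀ {a b : G}, a * b ∈ H ↔ (a ∈ H ↔ b ∈ H) :=
    fun {a b} => Subgroup.mul_mem_iff_of_index_two hH
  have hs : σ ^ 2 ∈ H := by rw [sq, hmem]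
  have hconjmem : ∀ x ∈ H, σ * x * σ⁻¹ ∈ H := by
    intro x hx
    rw [hmem, hmem]
    simp [hσ, hx, H.inv_mem_iff]
  set u : ℂ := ((η ⟨σ ^ 2, hs⟩ : ℂˣ) : ℂ) with hu_def
  have hu0 : u ≠ 0 := Units.ne_zero _
  have huu : u * u = 1 := by
    have h' : σ * σ ^ 2 * σ⁻¹ ∈ H := hconjmem _ hs
    have h2 := hconj ⟨σ ^ 2, hs⟩ h'
    have h3 : (⟨σ * σ ^ 2 * σ⁻¹, h'⟩ : H) = ⟨σ ^ 2, hs⟩ := by ext; group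
    rw [h3] at h2
    have := congrArg (fun z : ℂˣ => (z : ℂ)) (congrArg (fun z => (η ⟨σ ^ 2, hs⟩) * z) h2)
    simpa [hu_def] using this
  have hu3 : u ^ 3 = u := by linear_combination u * huu
  set P : Matrix (Fin 4) (Fin 4) ℂ := !![1,0,0,0; 0,0,1,0; 0,0,0,u; 0,1,0,0] with hP
  refine ⟨P, ?_, ?_⟩
  · rw [Matrix.isUnit_iff_isUnit_det]
    have : P.det = u := by simp [hP, Matrix.det_succ_row_zero, Fin.sum_univ_succ]
    rw [this]
    exact isUnit_iff_ne_zero.mpr hu0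
  -- intertwining on H
  have stepH : ∀ x : G, x ∈ H →
      sym3 (φ x) * P = P * Matrix.reindex finSumFinEquiv finSumFinEquiv
        (Matrix.fromBlocks (ψ₁ x) 0 0 (ψ₂ x)) := by
    intro x hx
    have hx' := hconjmem x hx
    set a : ℂ := ((η ⟨x, hx⟩ : ℂˣ) : ℂ) with ha_def
    have ha0 : a ≠ 0 := Units.ne_zero _
    have hd : ((η ⟨σ * x * σ⁻¹, hx'⟩ : ℂˣ) : ℂ) = a⁻¹ := by
      rw [hconj ⟨x, hx⟩ hx']
      simp [ha_def]
    rw [hφH x hx hx', hψ₁H x hx hx', hψ₂H x hx hx', blk', hd]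
    ext i j
    fin_cases i <;> fin_cases j <;>
      simp [sym3, hP, Matrix.mul_apply, Fin.sum_univ_succ, Matrix.diagonal] <;>
      field_simp <;> ring
  -- intertwining at σ
  have stepσ : sym3 (φ σ) * P = P * Matrix.reindex finSumFinEquiv finSumFinEquiv
      (Matrix.fromBlocks (ψ₁ σ) 0 0 (ψ₂ σ)) := by
    rw [hφσ hs, hψ₁σ hs, hψ₂σ hs, blk']
    ext i j
    fin_cases i <;> fin_cases j <;>
      simp [sym3, hP, Matrix.mul_apply, Fin.sum_univ_succ, ← hu_def] <;>
      first
        | linear_combination (1 - u) * huu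
        | linear_combination (-u) * huu
        | linear_combination u * huu
        | linear_combination huu
        | ring
  intro g
  by_cases hg : g ∈ H
  · exact stepH g hg
  · have hx : σ⁻¹ * g ∈ H := by rw [hmem]; simp [hg, H.inv_mem_iff, hσ]
    have hgd : σ * (σ⁻¹ * g) = g := by group
    have hφg : φ g = φ σ * φ (σ⁻¹ * g) := by rw [← hφmul, hgd]
    calc sym3 (φ g) * P
        = sym3 (φ σ) * (sym3 (φ (σ⁻¹ * g)) * P) := by
          rw [hφg, sym3_mul', mul_assoc]
      _ = sym3 (φ σ) * (P * Matrix.reindex finSumFinEquiv finSumFinEquiv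
            (Matrix.fromBlocks (ψ₁ (σ⁻¹ * g)) 0 0 (ψ₂ (σ⁻¹ * g)))) := by
          rw [stepH _ hx]
      _ = (sym3 (φ σ) * P) * Matrix.reindex finSumFinEquiv finSumFinEquiv
            (Matrix.fromBlocks (ψ₁ (σ⁻¹ * g)) 0 0 (ψ₂ (σ⁻¹ * g))) := by
          rw [mul_assoc]
      _ = P * Matrix.reindex finSumFinEquiv finSumFinEquiv
            (Matrix.fromBlocks (ψ₁ g) 0 0 (ψ₂ g)) := by
          rw [stepσ, mul_assoc, blk_mul', ← hψ₁mul, ← hψ₂mul, hgd]
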